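/- Let a := tr(Υ·M) and b := τᵀ·P·τ, and let R(ω) := E[‖Γ₁(ξ+τ) − ω·(Γ₁−Γ)(ξ+τ)‖²_Υ]. If a > 0, then R restricted to the interval [0,1] attains its minimum uniquely at ω* = a / (a + b), and ω* ∈ (0, 1]. If a ≤ 0, then R restricted to [0,1] attains its minimum at ω = 0. -/

import Mathlib

/-!
Write `ξ = A ζ` with `ζ` standard Gaussian and `A Aᵀ = Ω`. Since `Γ₁ τ = 0`, the loss vector
`Γ₁(ξ + τ) - ω (Γ₁ - Γ)(ξ + τ)` is the affine function `(Γ₁ - ω(Γ₁ - Γ)) A ζ - ω (Γ₁ - Γ) τ` of `ζ`,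
and `E ζ = 0`, `E ζ ζᵀ = I` turn the risk into `tr(Γ₁ᵀ Υ Γ₁ Ω) - 2 a ω + (a + b) ω²`; the two
cross terms both reduce to `tr(Υ M)` by `Γ₁ Ω (Γ₁ - Γ)ᵀ = M` and the symmetry of `Ω`.
As `b = ‖(Γ₁ - Γ) τ‖²_Υ ≥ 0`, for `a > 0` this is a strictly convex parabola with vertex
`a / (a + b) ∈ (0, 1]`, while for `a ≤ 0` its increment `-a ω (2 - ω) + b ω²` over `ω = 0` is
nonnegative on `[0, 1]`.
-/

open Matrix MeasureTheory ProbabilityTheory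

/-- The standard Gaussian measure on `ℝ^m` (iid standard normal coordinates). -/
noncomputable def stdGaussian (m : ℕ) : Measure (Fin m → ℝ) :=
  Measure.pi fun _ => gaussianReal 0 1

/-- `μ` is the multivariate Gaussian law on `ℝ^m` with mean `mean` and covariance
matrix `V`, i.e. the law of `mean + A ζ` for a standard Gaussian `ζ` and any matrix
`A` with `A Aᵀ = V`. -/
def IsGaussianLaw {m : ℕ} (μ : Measure (Fin m → ℝ)) (mean : Fin m → ℝ)
    (V : Matrix (Fin m) (Fin m) ℝ) : Prop :=
  ∃ A : Matrix (Fin m) (Fin m) ℝ, A * Aᵀ = V ∧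
    μ = Measure.map (fun x => mean + A.mulVec x) (stdGaussian m)

section QuadForm

variable {R ι κ : Type*} [CommSemiring R] [Fintype ι] [Fintype κ]

lemma dotProduct_mulVec_eq_sum_mul (Q : Matrix ι ι R) (z : ι → R) :
    z ⬝ᵥ Q *ᵥ z = ∑ p, ∑ q, Q p q * (z p * z q) := by
  simp only [dotProduct, mulVec, Finset.mul_sum]
  exact Finset.sum_congr rfl fun p _ => Finset.sum_congr rfl fun q _ => by ring

lemma dotProduct_transpose_mul_mul_mulVec (Υ : Matrix κ κ R) (B : Matrix κ ι R) (z : ι → R) :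
    z ⬝ᵥ (Bᵀ * Υ * B) *ᵥ z = B *ᵥ z ⬝ᵥ Υ *ᵥ B *ᵥ z := by
  rw [← mulVec_mulVec, ← mulVec_mulVec, dotProduct_mulVec, vecMul_transpose]

lemma affine_quadForm_eq (Υ : Matrix κ κ R) (B : Matrix κ ι R) (c : κ → R) (z : ι → R) :
    (B *ᵥ z + c) ⬝ᵥ Υ *ᵥ (B *ᵥ z + c)
      = z ⬝ᵥ (Bᵀ * Υ * B) *ᵥ z + (vecMul (Υ *ᵥ c) B + vecMul c (Υ * B)) ⬝ᵥ z
        + c ⬝ᵥ Υ *ᵥ c := by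
  rw [dotProduct_transpose_mul_mul_mulVec]
  simp only [mulVec_add, add_dotProduct, dotProduct_add, ← dotProduct_mulVec, ← mulVec_mulVec,
    dotProduct_comm (Υ *ᵥ c)]
  ring

end QuadForm

lemma integral_mul_self_gaussianReal (v : NNReal) : ∫ x, x * x ∂gaussianReal 0 v = v := by
  have hvar :=
    variance_of_integral_eq_zero aemeasurable_id (integral_id_gaussianReal (μ := 0) (v := v))
  rw [variance_id_gaussianReal] at hvar
  simpa only [id, ← sq] using hvar.symm

section StdGaussian

variable {m : ℕ}

instance isProbabilityMeasure_stdGaussian : IsProbabilityMeasure (stdGaussian m) := by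
  unfold _root_.stdGaussian; infer_instance

lemma memLp_eval_stdGaussian (p : Fin m) :
    MemLp (fun z : Fin m → ℝ => z p) 2 (stdGaussian m) :=
  (memLp_id_gaussianReal 2).comp_measurePreserving (measurePreserving_eval _ p)

lemma integrable_eval_mul_eval_stdGaussian (p q : Fin m) :
    Integrable (fun z : Fin m → ℝ => z p * z q) (stdGaussian m) :=
  (memLp_eval_stdGaussian p).integrable_mul (memLp_eval_stdGaussian q)

lemma integral_eval_stdGaussian (p : Fin m) : ∫ z, z p ∂stdGaussian m = 0 :=
  integral_eval.trans integral_id_gaussianReal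

lemma integral_eval_mul_eval_stdGaussian (p q : Fin m) :
    ∫ z, z p * z q ∂stdGaussian m = if p = q then 1 else 0 := by
  split_ifs with hpq
  · subst hpq
    rw [_root_.stdGaussian, integral_comp_eval (X := fun _ => ℝ) (f := fun x : ℝ => x * x)
      (by fun_prop), integral_mul_self_gaussianReal, NNReal.coe_one]
  · have hind : IndepFun (fun z : Fin m → ℝ => z p) (fun z => z q) (stdGaussian m) :=
      (iIndepFun_pi (X := fun _ => id) fun _ => aemeasurable_id).indepFun hpq
    rw [hind.integral_fun_mul_eq_mul_integral (memLp_eval_stdGaussian p).aestronglyMeasurable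
      (memLp_eval_stdGaussian q).aestronglyMeasurable, integral_eval_stdGaussian, zero_mul]

lemma integrable_dotProduct_stdGaussian (u : Fin m → ℝ) :
    Integrable (fun z => u ⬝ᵥ z) (stdGaussian m) :=
  integrable_finsetSum _ fun p _ =>
    ((memLp_eval_stdGaussian p).integrable one_le_two).const_mul (u p)

lemma integral_dotProduct_stdGaussian (u : Fin m → ℝ) :
    ∫ z, u ⬝ᵥ z ∂stdGaussian m = 0 := by
  simp only [dotProduct]
  rw [integral_finsetSum _ fun p _ =>
    ((memLp_eval_stdGaussian p).integrable one_le_two).const_mul (u p)]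
  simp [integral_const_mul, integral_eval_stdGaussian]

lemma integrable_dotProduct_mulVec_stdGaussian (Q : Matrix (Fin m) (Fin m) ℝ) :
    Integrable (fun z => z ⬝ᵥ Q *ᵥ z) (stdGaussian m) := by
  simp_rw [dotProduct_mulVec_eq_sum_mul]
  exact integrable_finsetSum _ fun p _ => integrable_finsetSum _ fun q _ =>
    (integrable_eval_mul_eval_stdGaussian p q).const_mul _

lemma integral_dotProduct_mulVec_stdGaussian (Q : Matrix (Fin m) (Fin m) ℝ) :
    ∫ z, z ⬝ᵥ Q *ᵥ z ∂stdGaussian m = Q.trace := by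
  have hrow (p : Fin m) : ∫ z, ∑ q, Q p q * (z p * z q) ∂stdGaussian m = Q p p := by
    rw [integral_finsetSum _ fun q _ => (integrable_eval_mul_eval_stdGaussian p q).const_mul _]
    simp [integral_const_mul, integral_eval_mul_eval_stdGaussian]
  simp_rw [dotProduct_mulVec_eq_sum_mul]
  rw [integral_finsetSum (f := fun (p : Fin m) (z : Fin m → ℝ) => ∑ q, Q p q * (z p * z q)) _
    fun p _ => integrable_finsetSum _ fun q _ =>
      (integrable_eval_mul_eval_stdGaussian p q).const_mul _]
  simp [hrow, trace]

lemma integral_affine_quadForm_stdGaussian {d : ℕ} (Υ : Matrix (Fin d) (Fin d) ℝ)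
    (B : Matrix (Fin d) (Fin m) ℝ) (c : Fin d → ℝ) :
    ∫ z, (B *ᵥ z + c) ⬝ᵥ Υ *ᵥ (B *ᵥ z + c) ∂stdGaussian m
      = (Bᵀ * Υ * B).trace + c ⬝ᵥ Υ *ᵥ c := by
  have hquad := integrable_dotProduct_mulVec_stdGaussian (Bᵀ * Υ * B)
  have hlin := integrable_dotProduct_stdGaussian (vecMul (Υ *ᵥ c) B + vecMul c (Υ * B))
  simp_rw [affine_quadForm_eq]
  rw [integral_add ?_ (integrable_const _), integral_add hquad hlin,
    integral_dotProduct_mulVec_stdGaussian, integral_dotProduct_stdGaussian, integral_const]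
  · simp
  · exact hquad.add hlin

end StdGaussian

lemma IsGaussianLaw.integral_affine_quadForm {m d : ℕ} {μ : Measure (Fin m → ℝ)}
    {ν : Fin m → ℝ} {Ω : Matrix (Fin m) (Fin m) ℝ} (hμ : IsGaussianLaw μ ν Ω)
    (Υ : Matrix (Fin d) (Fin d) ℝ) (B : Matrix (Fin d) (Fin m) ℝ) (c : Fin d → ℝ) :
    ∫ x, (B *ᵥ x + c) ⬝ᵥ Υ *ᵥ (B *ᵥ x + c) ∂μ
      = (Bᵀ * Υ * B * Ω).trace + (B *ᵥ ν + c) ⬝ᵥ Υ *ᵥ (B *ᵥ ν + c) := by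
  obtain ⟨A, rfl, rfl⟩ := hμ
  have hB (z : Fin m → ℝ) : B *ᵥ (ν + A *ᵥ z) + c = (B * A) *ᵥ z + (B *ᵥ ν + c) := by
    rw [mulVec_add, mulVec_mulVec]; abel
  rw [integral_map (by fun_prop) (by fun_prop)]
  simp_rw [hB]
  rw [integral_affine_quadForm_stdGaussian, transpose_mul]
  simp only [Matrix.mul_assoc]
  rw [trace_mul_comm Aᵀ]
  simp only [Matrix.mul_assoc]

section Risk

variable {m d : ℕ}

lemma integral_risk_eq {μ : Measure (Fin m → ℝ)} {Ω : Matrix (Fin m) (Fin m) ℝ}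
    (hμ : IsGaussianLaw μ 0 Ω) {Γ₁ : Matrix (Fin d) (Fin m) ℝ} {τ : Fin m → ℝ}
    (hΓ₁τ : Γ₁ *ᵥ τ = 0) (D : Matrix (Fin d) (Fin m) ℝ) (Υ : Matrix (Fin d) (Fin d) ℝ)
    (w : ℝ) :
    ∫ x, (Γ₁ *ᵥ (x + τ) - w • D *ᵥ (x + τ)) ⬝ᵥ Υ *ᵥ (Γ₁ *ᵥ (x + τ) - w • D *ᵥ (x + τ)) ∂μ
      = ((Γ₁ - w • D)ᵀ * Υ * (Γ₁ - w • D) * Ω).trace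
        + w ^ 2 * (τ ⬝ᵥ (Dᵀ * Υ * D) *ᵥ τ) := by
  have haffine (x : Fin m → ℝ) :
      Γ₁ *ᵥ (x + τ) - w • D *ᵥ (x + τ) = (Γ₁ - w • D) *ᵥ x + (-w) • D *ᵥ τ := by
    simp only [mulVec_add, hΓ₁τ, sub_mulVec, smul_mulVec]
    module
  simp_rw [haffine]
  rw [hμ.integral_affine_quadForm, mulVec_zero, zero_add, dotProduct_transpose_mul_mul_mulVec,
    mulVec_smul, smul_dotProduct, dotProduct_smul, smul_eq_mul, smul_eq_mul]
  ring

lemma trace_risk_eq {Γ₁ D : Matrix (Fin d) (Fin m) ℝ}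
    {Υ M : Matrix (Fin d) (Fin d) ℝ} {Ω : Matrix (Fin m) (Fin m) ℝ} (hΩ : Ω.IsSymm)
    (hMdef : M = D * Ω * Dᵀ) (hMcross : Γ₁ * Ω * Dᵀ = M) (w : ℝ) :
    ((Γ₁ - w • D)ᵀ * Υ * (Γ₁ - w • D) * Ω).trace
      = (Γ₁ᵀ * Υ * Γ₁ * Ω).trace - 2 * (Υ * M).trace * w + (Υ * M).trace * w ^ 2 := by
  have hMsymm : D * Ω * Γ₁ᵀ = M := by
    have hMt : Mᵀ = M := by simp [hMdef, transpose_mul, hΩ.eq, Matrix.mul_assoc]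
    rw [← hMt, ← hMcross]
    simp [transpose_mul, hΩ.eq, Matrix.mul_assoc]
  have hDD : (Dᵀ * Υ * D * Ω).trace = (Υ * M).trace := by
    rw [hMdef, Matrix.mul_assoc, Matrix.mul_assoc, trace_mul_comm]
    simp only [Matrix.mul_assoc]
  have hDΓ : (Dᵀ * Υ * Γ₁ * Ω).trace = (Υ * M).trace := by
    rw [← hMcross, Matrix.mul_assoc, Matrix.mul_assoc, trace_mul_comm]
    simp only [Matrix.mul_assoc]
  have hΓD : (Γ₁ᵀ * Υ * D * Ω).trace = (Υ * M).trace := by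
    rw [← hMsymm, Matrix.mul_assoc, Matrix.mul_assoc, trace_mul_comm]
    simp only [Matrix.mul_assoc]
  simp only [transpose_sub, transpose_smul, Matrix.sub_mul, Matrix.mul_sub, Matrix.smul_mul,
    Matrix.mul_smul, trace_sub, trace_smul, hDD, hDΓ, hΓD, smul_eq_mul]
  ring

end Risk

section Quadratic

variable {a b c w : ℝ}

lemma div_add_mem_Ioc (ha : 0 < a) (hb : 0 ≤ b) : a / (a + b) ∈ Set.Ioc 0 1 :=
  ⟨by positivity, (div_le_one (by positivity)).2 (by linarith)⟩

lemma quadratic_vertex_lt (ha : 0 < a) (hb : 0 ≤ b) (hw : w ≠ a / (a + b)) :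
    c - 2 * a * (a / (a + b)) + (a + b) * (a / (a + b)) ^ 2
      < c - 2 * a * w + (a + b) * w ^ 2 := by
  have hab : 0 < a + b := by linarith
  have hsq : 0 < (w - a / (a + b)) ^ 2 := by
    have := sub_ne_zero.2 hw
    positivity
  have hvertex : c - 2 * a * w + (a + b) * w ^ 2
      = c - 2 * a * (a / (a + b)) + (a + b) * (a / (a + b)) ^ 2
        + (a + b) * (w - a / (a + b)) ^ 2 := by
    field_simp
    ring
  linarith [mul_pos hab hsq]

lemma quadratic_zero_le (ha : a ≤ 0) (hb : 0 ≤ b) (hw : w ∈ Set.Icc (0 : ℝ) 1) :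
    c - 2 * a * 0 + (a + b) * 0 ^ 2 ≤ c - 2 * a * w + (a + b) * w ^ 2 := by
  obtain ⟨hw0, hw1⟩ := hw
  linarith [mul_nonneg hb (sq_nonneg w),
    mul_nonneg (mul_nonneg hw0 (by linarith : 0 ≤ 2 - w)) (neg_nonneg.2 ha)]

end Quadratic

theorem stmt_9_general {m d₁ : ℕ}
    (Ω : Matrix (Fin m) (Fin m) ℝ) (hΩ : Ω.PosSemidef)
    (μ : Measure (Fin m → ℝ)) (hμ : IsGaussianLaw μ 0 Ω)
    (τ : Fin m → ℝ)
    (Γ₁ Γ : Matrix (Fin d₁) (Fin m) ℝ) (hΓ₁τ : Γ₁.mulVec τ = 0)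
    (Υ : Matrix (Fin d₁) (Fin d₁) ℝ) (hΥ : Υ.PosDef)
    (M : Matrix (Fin d₁) (Fin d₁) ℝ) (hMdef : M = (Γ₁ - Γ) * Ω * (Γ₁ - Γ)ᵀ)
    (hMcross : Γ₁ * Ω * (Γ₁ - Γ)ᵀ = M)
    (P : Matrix (Fin m) (Fin m) ℝ) (hPdef : P = (Γ₁ - Γ)ᵀ * Υ * (Γ₁ - Γ))
    :
    ∀ R : ℝ → ℝ,
      R = (fun w =>
        ∫ x, (Γ₁.mulVec (x + τ) - w • (Γ₁ - Γ).mulVec (x + τ))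
              ⬝ᵥ Υ.mulVec (Γ₁.mulVec (x + τ) - w • (Γ₁ - Γ).mulVec (x + τ)) ∂μ) →
      ((0 < (Υ * M).trace →
        ((Υ * M).trace / ((Υ * M).trace + τ ⬝ᵥ P.mulVec τ) ∈ Set.Ioc (0 : ℝ) 1 ∧
          ∀ w ∈ Set.Icc (0 : ℝ) 1,
            w ≠ (Υ * M).trace / ((Υ * M).trace + τ ⬝ᵥ P.mulVec τ) →
            R ((Υ * M).trace / ((Υ * M).trace + τ ⬝ᵥ P.mulVec τ)) < R w)) ∧
      ((Υ * M).trace ≤ 0 → ∀ w ∈ Set.Icc (0 : ℝ) 1, R 0 ≤ R w)) := by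
  intro R hR
  have hb : 0 ≤ τ ⬝ᵥ P *ᵥ τ := by
    rw [hPdef, dotProduct_transpose_mul_mul_mulVec]
    exact hΥ.posSemidef.dotProduct_mulVec_nonneg _
  have hRw (w : ℝ) : R w = (Γ₁ᵀ * Υ * Γ₁ * Ω).trace - 2 * (Υ * M).trace * w
      + ((Υ * M).trace + τ ⬝ᵥ P *ᵥ τ) * w ^ 2 := by
    simp only [hR]
    rw [integral_risk_eq hμ hΓ₁τ,
      trace_risk_eq (isHermitian_iff_isSymm.1 hΩ.isHermitian) hMdef hMcross, hPdef]
    ring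
  refine ⟨fun ha => ⟨div_add_mem_Ioc ha hb, fun w _ hw => ?_⟩, fun ha w hw => ?_⟩
  · simpa only [hRw] using quadratic_vertex_lt ha hb hw
  · simpa only [hRw] using quadratic_zero_le ha hb hw

/-- Lemma 2 of the paper (Gaussian-limit form): the optimal mixing weight for the
linear-pool semi-modular posterior. With `a = tr(ΥM)` and `b = τᵀPτ`, if `a > 0`
the risk over `[0,1]` is uniquely minimized at `ω* = a/(a+b) ∈ (0,1]`; if `a ≤ 0`
it is minimized at `0`. -/
theorem stmt_9 {m d₁ : ℕ}
    (Ω : Matrix (Fin m) (Fin m) ℝ) (hΩ : Ω.PosSemidef)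
    (μ : Measure (Fin m → ℝ)) (hμ : IsGaussianLaw μ 0 Ω)
    (τ : Fin m → ℝ)
    (Γ₁ Γ : Matrix (Fin d₁) (Fin m) ℝ) (hΓ₁τ : Γ₁.mulVec τ = 0)
    (Υ : Matrix (Fin d₁) (Fin d₁) ℝ) (hΥ : Υ.PosDef) (hΥsymm : Υ.IsSymm)
    (M : Matrix (Fin d₁) (Fin d₁) ℝ) (hMdef : M = (Γ₁ - Γ) * Ω * (Γ₁ - Γ)ᵀ)
    (hMcross : Γ₁ * Ω * (Γ₁ - Γ)ᵀ = M)
    (P : Matrix (Fin m) (Fin m) ℝ) (hPdef : P = (Γ₁ - Γ)ᵀ * Υ * (Γ₁ - Γ))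
    :
    ∀ R : ℝ → ℝ,
      R = (fun w =>
        ∫ x, (Γ₁.mulVec (x + τ) - w • (Γ₁ - Γ).mulVec (x + τ))
              ⬝ᵥ Υ.mulVec (Γ₁.mulVec (x + τ) - w • (Γ₁ - Γ).mulVec (x + τ)) ∂μ) →
      ((0 < (Υ * M).trace →
        ((Υ * M).trace / ((Υ * M).trace + τ ⬝ᵥ P.mulVec τ) ∈ Set.Ioc (0 : ℝ) 1 ∧
          ∀ w ∈ Set.Icc (0 : ℝ) 1,
            w ≠ (Υ * M).trace / ((Υ * M).trace + τ ⬝ᵥ P.mulVec τ) →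
            R ((Υ * M).trace / ((Υ * M).trace + τ ⬝ᵥ P.mulVec τ)) < R w)) ∧
      ((Υ * M).trace ≤ 0 → ∀ w ∈ Set.Icc (0 : ℝ) 1, R 0 ≤ R w)) :=
  stmt_9_general Ω hΩ μ hμ τ Γ₁ Γ hΓ₁τ Υ hΥ M hMdef hMcross P hPdef
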